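/- arXiv:1510.04381 — 3 statements merged into one kernel-verified Lean document; each statement's English description precedes it below -/
import Mathlib

section
/- Let A_1 = K[a_1,…,a_n] and A_2 = K[b_1,…,b_m] be solvable polynomial algebras with admissible systems (𝔅_1, ≺_1) and (𝔅_2, ≺_2) respectively. Then A = A_1 ⊗_K A_2 is a solvable polynomial algebra with admissible system (𝔅, ≺), where 𝔅 = {a^α ⊗ b^β | a^α ∈ 𝔅_1, b^β ∈ 𝔅_2} and ≺ is defined by: a^α ⊗ b^β ≺ a^γ ⊗ b^η if and only if a^α ≺_1 a^γ, or a^α = a^γ and b^β ≺_2 b^η. -/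
noncomputable section

open scoped BigOperators

/-- A monomial ordering on the exponent monoid `ℕ^n`: a well-ordering, total and transitive,
admitting `0` (i.e. the monomial `1`) as least element and compatible with addition of
exponents (i.e. with multiplication of monomials from both sides). -/
structure MonOrder (n : ℕ) where
  lt : (Fin n → ℕ) → (Fin n → ℕ) → Prop
  wf : WellFounded lt
  lt_trans : ∀ {α β γ}, lt α β → lt β γ → lt α γ
  lt_total : ∀ α β, lt α β ∨ α = β ∨ lt β α
  zero_min : ∀ α : Fin n → ℕ, α ≠ 0 → lt 0 α
  add_right : ∀ {α β : Fin n → ℕ} (γ : Fin n → ℕ), lt α β → lt (α + γ) (β + γ)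

/-- The ordered monomial `a₁^{α 1} ⋯ a_n^{α n}` in the generators `a`. -/
def SolvMono {A : Type*} [Ring A] {n : ℕ} (a : Fin n → A) (α : Fin n → ℕ) : A :=
  ((List.finRange n).map fun i => a i ^ α i).prod

/-- A solvable polynomial algebra structure on a `K`-algebra `A` with generators
`gen 1, …, gen n`:  (S1) the ordered monomials in the generators form a PBW `K`-basis;
(S2) there is a monomial ordering `ord` such that
`a^α a^β = λ_{α,β} a^{α+β} + (terms ≺ a^{α+β})` with `λ_{α,β} ≠ 0`. -/
structure SolvAlg (K : Type*) [Field K] (A : Type*) [Ring A] [Algebra K A] (n : ℕ) where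
  gen : Fin n → A
  basis : Module.Basis (Fin n → ℕ) K A
  basis_eq : ∀ α, basis α = SolvMono gen α
  ord : MonOrder n
  s2_lc : ∀ α β, basis.repr (basis α * basis β) (α + β) ≠ 0
  s2_lower : ∀ α β δ, δ ∈ (basis.repr (basis α * basis β)).support → δ ≠ α + β →
    ord.lt δ (α + β)

namespace SolvAlg

variable {K : Type*} [Field K] {A : Type*} [Ring A] [Algebra K A] {n : ℕ}

/-- `α` is the exponent of the leading monomial of `f` (so in particular `f ≠ 0`). -/
def IsLM (S : SolvAlg K A n) (f : A) (α : Fin n → ℕ) : Prop :=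
  α ∈ (S.basis.repr f).support ∧
    ∀ β ∈ (S.basis.repr f).support, β ≠ α → S.ord.lt β α

/-- Left division of monomials: `a^α |_L a^β` iff `a^β = LM(a^γ a^α)` for some monomial `a^γ`. -/
def DvdL (S : SolvAlg K A n) (α β : Fin n → ℕ) : Prop :=
  ∃ γ, S.IsLM (S.basis γ * S.basis α) β

/-- `α ⪯ β` for the monomial ordering. -/
def LEord (S : SolvAlg K A n) (α β : Fin n → ℕ) : Prop :=
  α = β ∨ S.ord.lt α β

/-- `G` is a left Gröbner basis of the left ideal `N`. -/
def IsGBIdeal (S : SolvAlg K A n) (N : Ideal A) (G : Set A) : Prop :=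
  G ⊆ (N : Set A) ∧ (0 : A) ∉ G ∧
    ∀ f ∈ N, f ≠ 0 → ∃ g ∈ G, ∃ α β, S.IsLM g α ∧ S.IsLM f β ∧ S.DvdL α β

/-- The set of (exponents of) normal monomials mod `G`. -/
def NormalSet (S : SolvAlg K A n) (G : Set A) : Set (Fin n → ℕ) :=
  {γ | ∀ g ∈ G, ∀ α, S.IsLM g α → ¬ S.DvdL α γ}

/-- A minimal left Gröbner basis: no proper subset is again a left Gröbner basis. -/
def IsMinimalGBIdeal (S : SolvAlg K A n) (N : Ideal A) (G : Set A) : Prop :=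
  IsGBIdeal S N G ∧ ∀ G' : Set A, G' ⊂ G → ¬ IsGBIdeal S N G'

/-- A reduced left Gröbner basis: minimal, monic, and all tails normal mod `G`. -/
def IsReducedGBIdeal (S : SolvAlg K A n) (N : Ideal A) (G : Set A) : Prop :=
  IsMinimalGBIdeal S N G ∧
  (∀ g ∈ G, ∀ α, S.IsLM g α → S.basis.repr g α = 1) ∧
  (∀ g ∈ G, ∀ α, S.IsLM g α →
    g - S.basis α ∈ Submodule.span K ((fun γ => S.basis γ) '' NormalSet S G))

/-- The set of monomials `a^α e_i` occurring in an element `ξ` of the free module `A^s`. -/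
def MSupp (S : SolvAlg K A n) {s : ℕ} (ξ : Fin s → A) : Set ((Fin n → ℕ) × Fin s) :=
  {p | S.basis.repr (ξ p.2) p.1 ≠ 0}

/-- `p` is the leading monomial of `ξ` with respect to the (left monomial) ordering `r`
on the monomials of the free module `A^s`. -/
def IsLMMr (S : SolvAlg K A n) {s : ℕ}
    (r : ((Fin n → ℕ) × Fin s) → ((Fin n → ℕ) × Fin s) → Prop)
    (ξ : Fin s → A) (p : (Fin n → ℕ) × Fin s) : Prop :=
  p ∈ S.MSupp ξ ∧ ∀ q ∈ S.MSupp ξ, q ≠ p → r q p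

/-- Left division of module monomials:  `a^α e_i |_L a^β e_j` iff `i = j` and
`a^β e_i = LM(a^γ · a^α e_i)` for some `a^γ`. -/
def MDvdL (S : SolvAlg K A n) {s : ℕ} (p q : (Fin n → ℕ) × Fin s) : Prop :=
  p.2 = q.2 ∧ ∃ γ, S.IsLM (S.basis γ * S.basis p.1) q.1

/-- `G` is a left Gröbner basis of the set (submodule) `Nset` of the free module `A^s`,
with respect to the left monomial ordering `r`. -/
def IsGBrel (S : SolvAlg K A n) {s : ℕ}
    (r : ((Fin n → ℕ) × Fin s) → ((Fin n → ℕ) × Fin s) → Prop)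
    (Nset : Set (Fin s → A)) (G : Set (Fin s → A)) : Prop :=
  G ⊆ Nset ∧ (0 : Fin s → A) ∉ G ∧
    ∀ ξ ∈ Nset, ξ ≠ 0 → ∃ γ ∈ G, ∃ p q, S.IsLMMr r γ p ∧ S.IsLMMr r ξ q ∧ S.MDvdL p q

/-- The left S-polynomial `S_ℓ(ξ, ζ)` of `ξ, ζ` whose leading monomials are
`a^α e_i` and `a^β e_j` respectively. -/
def spolyData (S : SolvAlg K A n) {s : ℕ} (ξ ζ : Fin s → A)
    (α β : Fin n → ℕ) (i j : Fin s) : Fin s → A :=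
  if i = j then
    (S.basis.repr ((S.basis ((fun k => max (α k) (β k)) - α) • ξ) i)
        (fun k => max (α k) (β k)))⁻¹ •
      (S.basis ((fun k => max (α k) (β k)) - α) • ξ) -
    (S.basis.repr ((S.basis ((fun k => max (α k) (β k)) - β) • ζ) i)
        (fun k => max (α k) (β k)))⁻¹ •
      (S.basis ((fun k => max (α k) (β k)) - β) • ζ)
  else 0

end SolvAlg

/-- A left monomial ordering on the monomials `{a^α e_i}` of the free module `A^s`:
a total ordering compatible with the (left) multiplication by monomials of `A` and
restricting on each component to the monomial ordering of `A`. -/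
structure ModOrder {K : Type*} [Field K] {A : Type*} [Ring A] [Algebra K A] {n : ℕ}
    (S : SolvAlg K A n) (s : ℕ) where
  lt : ((Fin n → ℕ) × Fin s) → ((Fin n → ℕ) × Fin s) → Prop
  lt_irrefl : ∀ p, ¬ lt p p
  lt_trans : ∀ {p q r}, lt p q → lt q r → lt p r
  lt_total : ∀ p q, lt p q ∨ p = q ∨ lt q p
  compat : ∀ {α β : Fin n → ℕ} {i j : Fin s} (γ δ ε : Fin n → ℕ),
    lt (α, i) (β, j) → SolvAlg.IsLM S (S.basis γ * S.basis α) δ →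
    SolvAlg.IsLM S (S.basis γ * S.basis β) ε → lt (δ, i) (ε, j)
  base : ∀ (α β : Fin n → ℕ) (i : Fin s), S.ord.lt α β → lt (α, i) (β, i)

/-!
The monomials `a^α ⊗ b^β` form a `K`-basis of `A₁ ⊗_K A₂` because tensor products of bases are
bases, and `a^α ⊗ b^β = (a^α ⊗ 1)(1 ⊗ b^β)` is the ordered monomial in the generators `a_i ⊗ 1`
followed by `1 ⊗ b_j`. Since `(a^α ⊗ b^β)(a^γ ⊗ b^η) = a^α a^γ ⊗ b^β b^η`, the coefficient of
`a^δ ⊗ b^ε` in such a product is the product of the coefficients of `a^δ` and `b^ε`. Hence the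
leading coefficient is `λ_{α,γ} λ_{β,η} ≠ 0`, and every other monomial `a^δ ⊗ b^ε` that occurs has
either `a^δ ≺₁ a^{α+γ}`, or `δ = α + γ` and `b^ε ≺₂ b^{β+η}`: it is smaller for the lexicographic
combination of the two orderings, which is again a monomial ordering.
-/

open scoped TensorProduct

section SolvMono

variable {A : Type*} [Ring A] {n m : ℕ}

theorem solvMono_append (a : Fin n → A) (b : Fin m → A) (α : Fin n → ℕ) (β : Fin m → ℕ) :
    SolvMono (Fin.append a b) (Fin.append α β) = SolvMono a α * SolvMono b β := by
  have hpow : (fun k => Fin.append a b k ^ Fin.append α β k) =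
      Fin.append (fun i => a i ^ α i) (fun j => b j ^ β j) := by
    funext k
    refine Fin.addCases (fun i => ?_) (fun j => ?_) k <;> simp
  simp only [SolvMono, ← List.ofFn_eq_map, hpow, List.ofFn_fin_append, List.prod_append]

theorem map_solvMono {B F : Type*} [Ring B] [FunLike F A B] [RingHomClass F A B] (f : F)
    (a : Fin n → A) (α : Fin n → ℕ) : f (SolvMono a α) = SolvMono (fun i => f (a i)) α := by
  simp only [SolvMono, map_list_prod, List.map_map, Function.comp_def, map_pow]

theorem solvMono_tmul_solvMono {K : Type*} [CommRing K] {A₁ A₂ : Type*} [Ring A₁] [Algebra K A₁]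
    [Ring A₂] [Algebra K A₂] (a : Fin n → A₁) (b : Fin m → A₂) (α : Fin n → ℕ) (β : Fin m → ℕ) :
    SolvMono a α ⊗ₜ[K] SolvMono b β =
      SolvMono (Fin.append (fun i => a i ⊗ₜ[K] 1) (fun j => 1 ⊗ₜ[K] b j)) (Fin.append α β) := by
  have h₁ : SolvMono (fun i => a i ⊗ₜ[K] (1 : A₂)) α = SolvMono a α ⊗ₜ[K] 1 :=
    (map_solvMono (Algebra.TensorProduct.includeLeft : A₁ →ₐ[K] A₁ ⊗[K] A₂) a α).symm
  have h₂ : SolvMono (fun j => (1 : A₁) ⊗ₜ[K] b j) β = 1 ⊗ₜ[K] SolvMono b β :=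
    (map_solvMono (Algebra.TensorProduct.includeRight : A₂ →ₐ[K] A₁ ⊗[K] A₂) b β).symm
  rw [solvMono_append, h₁, h₂, Algebra.TensorProduct.tmul_mul_tmul, mul_one, one_mul]

end SolvMono

namespace MonOrder

variable {n m : ℕ} (o₁ : MonOrder n) (o₂ : MonOrder m)

theorem lex_trans {p q r : (Fin n → ℕ) × (Fin m → ℕ)} (hpq : Prod.Lex o₁.lt o₂.lt p q)
    (hqr : Prod.Lex o₁.lt o₂.lt q r) : Prod.Lex o₁.lt o₂.lt p r :=
  haveI : IsTrans _ o₁.lt := ⟨fun _ _ _ => o₁.lt_trans⟩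
  haveI : IsTrans _ o₂.lt := ⟨fun _ _ _ => o₂.lt_trans⟩
  Prod.Lex.trans hpq hqr

theorem lex_total (p q : (Fin n → ℕ) × (Fin m → ℕ)) :
    Prod.Lex o₁.lt o₂.lt p q ∨ p = q ∨ Prod.Lex o₁.lt o₂.lt q p := by
  obtain ⟨a, b⟩ := p
  obtain ⟨c, d⟩ := q
  rcases o₁.lt_total a c with h | rfl | h
  · exact .inl (.left _ _ h)
  · rcases o₂.lt_total b d with h | rfl | h
    · exact .inl (.right _ h)
    · exact .inr (.inl rfl)
    · exact .inr (.inr (.right _ h))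
  · exact .inr (.inr (.left _ _ h))

theorem lex_zero_min {p : (Fin n → ℕ) × (Fin m → ℕ)} (hp : p ≠ 0) :
    Prod.Lex o₁.lt o₂.lt 0 p := by
  obtain ⟨a, b⟩ := p
  by_cases ha : a = 0
  · subst ha
    exact .right _ (o₂.zero_min b fun hb => hp (by rw [hb]; rfl))
  · exact .left _ _ (o₁.zero_min a ha)

theorem lex_add_right {p q : (Fin n → ℕ) × (Fin m → ℕ)} (r : (Fin n → ℕ) × (Fin m → ℕ))
    (h : Prod.Lex o₁.lt o₂.lt p q) : Prod.Lex o₁.lt o₂.lt (p + r) (q + r) := by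
  cases h with
  | left _ _ h => exact .left _ _ (o₁.add_right _ h)
  | right _ h => exact .right _ (o₂.add_right _ h)

def lex : MonOrder (n + m) where
  lt := InvImage (Prod.Lex o₁.lt o₂.lt) (Fin.appendEquiv n m).symm
  wf := InvImage.wf _ (o₁.wf.prod_lex o₂.wf)
  lt_trans := lex_trans o₁ o₂
  lt_total _ _ :=
    (lex_total o₁ o₂ _ _).imp_right (Or.imp_left fun h => (Fin.appendEquiv n m).symm.injective h)
  zero_min _ hγ := lex_zero_min o₁ o₂ fun h => hγ ((Fin.appendEquiv n m).symm.injective h)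
  add_right γ := lex_add_right o₁ o₂ ((Fin.appendEquiv n m).symm γ)

theorem lex_lt_iff (γ δ : Fin (n + m) → ℕ) :
    (o₁.lex o₂).lt γ δ ↔
      o₁.lt (fun i => γ (Fin.castAdd m i)) (fun i => δ (Fin.castAdd m i)) ∨
        ((fun i => γ (Fin.castAdd m i)) = (fun i => δ (Fin.castAdd m i)) ∧
          o₂.lt (fun j => γ (Fin.natAdd n j)) (fun j => δ (Fin.natAdd n j))) :=
  Prod.lex_def

end MonOrder

namespace SolvAlg

variable {K : Type*} [Field K] {A₁ : Type*} [Ring A₁] [Algebra K A₁]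
  {A₂ : Type*} [Ring A₂] [Algebra K A₂] {n m : ℕ} (S₁ : SolvAlg K A₁ n) (S₂ : SolvAlg K A₂ m)

def tensorBasis : Module.Basis (Fin (n + m) → ℕ) K (A₁ ⊗[K] A₂) :=
  (S₁.basis.tensorProduct S₂.basis).reindex (Fin.appendEquiv n m)

theorem tensorBasis_apply (γ : Fin (n + m) → ℕ) :
    S₁.tensorBasis S₂ γ =
      S₁.basis (fun i => γ (Fin.castAdd m i)) ⊗ₜ[K] S₂.basis (fun j => γ (Fin.natAdd n j)) := by
  rw [tensorBasis, Module.Basis.reindex_apply, Module.Basis.tensorProduct_apply',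
    Fin.appendEquiv_symm_apply]

theorem tensorBasis_repr_tmul (x : A₁) (y : A₂) (γ : Fin (n + m) → ℕ) :
    (S₁.tensorBasis S₂).repr (x ⊗ₜ[K] y) γ =
      S₁.basis.repr x (fun i => γ (Fin.castAdd m i)) *
        S₂.basis.repr y (fun j => γ (Fin.natAdd n j)) := by
  rw [tensorBasis, Module.Basis.repr_reindex_apply, Fin.appendEquiv_symm_apply,
    Module.Basis.tensorProduct_repr_tmul_apply, smul_eq_mul, mul_comm]

theorem tensorBasis_repr_mul (γ δ ε : Fin (n + m) → ℕ) :
    (S₁.tensorBasis S₂).repr (S₁.tensorBasis S₂ γ * S₁.tensorBasis S₂ δ) ε =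
      S₁.basis.repr (S₁.basis (fun i => γ (Fin.castAdd m i)) *
          S₁.basis (fun i => δ (Fin.castAdd m i))) (fun i => ε (Fin.castAdd m i)) *
        S₂.basis.repr (S₂.basis (fun j => γ (Fin.natAdd n j)) *
          S₂.basis (fun j => δ (Fin.natAdd n j))) (fun j => ε (Fin.natAdd n j)) := by
  rw [tensorBasis_apply, tensorBasis_apply, Algebra.TensorProduct.tmul_mul_tmul,
    tensorBasis_repr_tmul]

theorem tensorBasis_eq_solvMono (γ : Fin (n + m) → ℕ) :
    S₁.tensorBasis S₂ γ =
      SolvMono (Fin.append (fun i => S₁.gen i ⊗ₜ[K] 1) (fun j => 1 ⊗ₜ[K] S₂.gen j)) γ := by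
  rw [tensorBasis_apply, basis_eq, basis_eq, solvMono_tmul_solvMono, Fin.append_castAdd_natAdd]

theorem lex_lt_of_mem_support_tensorBasis_mul (γ δ ε : Fin (n + m) → ℕ)
    (hε : ε ∈ ((S₁.tensorBasis S₂).repr (S₁.tensorBasis S₂ γ * S₁.tensorBasis S₂ δ)).support)
    (hne : ε ≠ γ + δ) : (S₁.ord.lex S₂.ord).lt ε (γ + δ) := by
  rw [Finsupp.mem_support_iff, tensorBasis_repr_mul] at hε
  rw [MonOrder.lex_lt_iff]
  by_cases hfst : (fun i => ε (Fin.castAdd m i)) = fun i => (γ + δ) (Fin.castAdd m i)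
  · refine .inr ⟨hfst, S₂.s2_lower _ _ _ (Finsupp.mem_support_iff.2 (right_ne_zero_of_mul hε)) ?_⟩
    intro hsnd
    exact hne ((Fin.appendEquiv n m).symm.injective (Prod.ext hfst hsnd))
  · exact .inl (S₁.s2_lower _ _ _ (Finsupp.mem_support_iff.2 (left_ne_zero_of_mul hε)) hfst)

def tensorProduct : SolvAlg K (A₁ ⊗[K] A₂) (n + m) where
  gen := Fin.append (fun i => S₁.gen i ⊗ₜ[K] 1) (fun j => 1 ⊗ₜ[K] S₂.gen j)
  basis := S₁.tensorBasis S₂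
  basis_eq := S₁.tensorBasis_eq_solvMono S₂
  ord := S₁.ord.lex S₂.ord
  s2_lc γ δ := by
    rw [tensorBasis_repr_mul]
    exact mul_ne_zero (S₁.s2_lc _ _) (S₂.s2_lc _ _)
  s2_lower := S₁.lex_lt_of_mem_support_tensorBasis_mul S₂

theorem tensorProduct_gen_castAdd (i : Fin n) :
    (S₁.tensorProduct S₂).gen (Fin.castAdd m i) = S₁.gen i ⊗ₜ[K] 1 :=
  Fin.append_left (fun i => S₁.gen i ⊗ₜ[K] (1 : A₂)) (fun j => 1 ⊗ₜ[K] S₂.gen j) i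

theorem tensorProduct_gen_natAdd (j : Fin m) :
    (S₁.tensorProduct S₂).gen (Fin.natAdd n j) = 1 ⊗ₜ[K] S₂.gen j :=
  Fin.append_right (fun i => S₁.gen i ⊗ₜ[K] (1 : A₂)) (fun j => 1 ⊗ₜ[K] S₂.gen j) j

end SolvAlg

/-- Proposition 1.1.5: the tensor product `A₁ ⊗_K A₂` of two solvable polynomial algebras is
again a solvable polynomial algebra, with PBW basis `{a^α ⊗ b^β}` and with the monomial
ordering given lexicographically from the two given ones. -/
theorem solvAlg_tensorProduct {K : Type*} [Field K]
    {A₁ : Type*} [Ring A₁] [Algebra K A₁] {A₂ : Type*} [Ring A₂] [Algebra K A₂]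
    {n m : ℕ} (S₁ : SolvAlg K A₁ n) (S₂ : SolvAlg K A₂ m) :
    ∃ S : SolvAlg K (A₁ ⊗[K] A₂) (n + m),
      (∀ i : Fin n, S.gen (Fin.castAdd m i) = S₁.gen i ⊗ₜ[K] 1) ∧
      (∀ j : Fin m, S.gen (Fin.natAdd n j) = 1 ⊗ₜ[K] S₂.gen j) ∧
      (∀ γ : Fin (n + m) → ℕ,
        S.basis γ =
          S₁.basis (fun i => γ (Fin.castAdd m i)) ⊗ₜ[K] S₂.basis (fun j => γ (Fin.natAdd n j))) ∧
      (∀ γ δ : Fin (n + m) → ℕ,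
        S.ord.lt γ δ ↔
          S₁.ord.lt (fun i => γ (Fin.castAdd m i)) (fun i => δ (Fin.castAdd m i)) ∨
          ((fun i => γ (Fin.castAdd m i)) = (fun i => δ (Fin.castAdd m i)) ∧
            S₂.ord.lt (fun j => γ (Fin.natAdd n j)) (fun j => δ (Fin.natAdd n j)))) :=
  ⟨S₁.tensorProduct S₂, S₁.tensorProduct_gen_castAdd S₂, S₁.tensorProduct_gen_natAdd S₂,
    S₁.tensorBasis_apply S₂, MonOrder.lex_lt_iff S₁.ord S₂.ord⟩
end
end

section
/- Let A be a solvable polynomial algebra with admissible system (𝔅, ≺), N a left ideal of A, and 𝒢 a left Gröbner basis of N. Set 𝒩(𝒢) = {a^α ∈ 𝔅 | LM(g) ∤_L a^α for all g ∈ 𝒢}. Then: (i) as K-vector spaces A = N ⊕ K-span 𝒩(𝒢); (ii) the cosets {a^α + N | a^α ∈ 𝒩(𝒢)} form a K-basis of A/N; and (iii) 𝒩(𝒢) is a finite set (equivalently dim_K A/N < ∞) if and only if for each i = 1,…,n there exists g ∈ 𝒢 with LM(g) = a_i^{m_i} for some m_i ∈ ℕ. -/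
noncomputable section

open scoped BigOperators

/-! Left multiplication by a monomial shifts leading exponents, `LM(a^γ f) = γ + LM(f)`, so
left divisibility of monomials is the componentwise order on `ℕ^n` and `𝒩(𝒢)` is the
complement of the upper set generated by the leading exponents of `𝒢`. Every exponent is the
leading exponent of an element of `N` or of a normal monomial, and a subspace containing an
element with each prescribed leading exponent is everything (cancel leading terms, well-founded
induction on `≺`); so `N + span 𝒩(𝒢) = A`. A nonzero element of `N ∩ span 𝒩(𝒢)` would have a
normal leading monomial left-divisible by some `LM(g)`. Hence `𝒩(𝒢)` maps to a basis of `A/N`,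
and the complement of an upper set in `ℕ^n` is finite iff the set contains a pure power of each
variable.
-/

namespace MonOrder

variable {n : ℕ} (o : MonOrder n)

theorem lt_irrefl (α : Fin n → ℕ) : ¬ o.lt α α := fun h => o.wf.asymmetric _ _ h h

theorem exists_max {s : Finset (Fin n → ℕ)} (hs : s.Nonempty) :
    ∃ α ∈ s, ∀ β ∈ s, β ≠ α → o.lt β α := by
  induction hs using Finset.Nonempty.cons_induction with
  | singleton a => exact ⟨a, by simp, by simp⟩
  | cons a s ha _ ih =>
    obtain ⟨m, hm, hmax⟩ := ih
    rcases o.lt_total a m with ham | rfl | hma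
    · refine ⟨m, Finset.mem_cons_of_mem hm, fun β hβ hβm => ?_⟩
      rcases Finset.mem_cons.mp hβ with rfl | hβ
      exacts [ham, hmax β hβ hβm]
    · exact absurd hm ha
    · refine ⟨a, Finset.mem_cons_self a s, fun β hβ hβa => ?_⟩
      rcases Finset.mem_cons.mp hβ with rfl | hβ
      · exact absurd rfl hβa
      · by_cases hβm : β = m
        · exact hβm ▸ hma
        · exact o.lt_trans (hmax β hβ hβm) hma

end MonOrder

theorem finite_setOf_forall_not_le_iff {ι : Type*} [DecidableEq ι] [Finite ι]
    (L : Set (ι → ℕ)) :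
    {γ | ∀ α ∈ L, ¬ α ≤ γ}.Finite ↔ ∀ i, ∃ m, Pi.single i m ∈ L := by
  constructor
  · intro hfin i
    by_contra! hL
    refine Set.infinite_of_injective_forall_mem (Pi.single_injective i)
      (fun m α hαL hle => ?_) hfin
    have hα : α = Pi.single i (α i) := by
      funext j
      by_cases hj : j = i
      · subst hj; simp
      · simpa [Pi.single_eq_of_ne hj] using hle j
    exact hL (α i) (hα ▸ hαL)
  · intro hL
    choose m hm using hL
    refine (Set.Finite.pi fun i => Set.finite_Iio (m i)).subset fun γ hγ i _ => ?_
    by_contra! hle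
    refine hγ _ (hm i) fun j => ?_
    by_cases hj : j = i
    · subst hj; simpa using hle
    · simp [Pi.single_eq_of_ne hj]

theorem LinearMap.linearIndependent_comp_and_span_eq_top_of_isCompl {ι R M Q : Type*} [Ring R]
    [AddCommGroup M] [Module R M] [AddCommGroup Q] [Module R Q] {φ : M →ₗ[R] Q}
    (hφ : Function.Surjective φ) {v : ι → M} (hv : LinearIndependent R v)
    (hc : IsCompl (LinearMap.ker φ) (Submodule.span R (Set.range v))) :
    LinearIndependent R (φ ∘ v) ∧ Submodule.span R (Set.range (φ ∘ v)) = ⊤ := by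
  refine ⟨hv.map hc.disjoint.symm, ?_⟩
  have hker : Submodule.map φ (LinearMap.ker φ) = ⊥ := LinearMap.le_ker_iff_map.mp le_rfl
  rw [Set.range_comp, Submodule.span_image, ← bot_sup_eq (Submodule.map φ _), ← hker,
    ← Submodule.map_sup, hc.sup_eq_top, ← LinearMap.range_eq_map, LinearMap.range_eq_top.mpr hφ]

namespace SolvAlg

variable {K : Type*} [Field K] {A : Type*} [Ring A] [Algebra K A] {n : ℕ} {S : SolvAlg K A n}

theorem IsLM.unique {f : A} {α β : Fin n → ℕ} (hα : S.IsLM f α) (hβ : S.IsLM f β) : α = β := by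
  by_contra hne
  exact S.ord.wf.asymmetric _ _ (hα.2 β hβ.1 (Ne.symm hne)) (hβ.2 α hα.1 hne)

theorem exists_isLM (S : SolvAlg K A n) {f : A} (hf : f ≠ 0) : ∃ α, S.IsLM f α :=
  S.ord.exists_max (Finsupp.support_nonempty_iff.mpr (by simpa using hf))

theorem isLM_basis (S : SolvAlg K A n) (α : Fin n → ℕ) : S.IsLM (S.basis α) α := by
  refine ⟨by simp, fun β hβ hne => absurd ?_ hne⟩
  simpa [Finsupp.support_single] using hβ

theorem repr_basis_mul (S : SolvAlg K A n) (γ : Fin n → ℕ) (f : A) (ε : Fin n → ℕ) :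
    S.basis.repr (S.basis γ * f) ε =
      (S.basis.repr f).sum fun β c => c * S.basis.repr (S.basis γ * S.basis β) ε := by
  conv_lhs => rw [← S.basis.linearCombination_repr f]
  rw [Finsupp.linearCombination_apply, Finsupp.mul_sum, map_finsuppSum, Finsupp.sum_apply]
  refine Finsupp.sum_congr fun β _ => ?_
  rw [mul_smul_comm, map_smul, Finsupp.smul_apply, smul_eq_mul]

theorem eq_or_lt_of_mem_support_basis_mul (S : SolvAlg K A n) {γ β ε : Fin n → ℕ}
    (hε : ε ∈ (S.basis.repr (S.basis γ * S.basis β)).support) :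
    ε = γ + β ∨ S.ord.lt ε (γ + β) := by
  by_cases h : ε = γ + β
  exacts [Or.inl h, Or.inr (S.s2_lower γ β ε hε h)]

theorem IsLM.basis_mul {f : A} {δ : Fin n → ℕ} (hf : S.IsLM f δ) (γ : Fin n → ℕ) :
    S.IsLM (S.basis γ * f) (γ + δ) := by
  obtain ⟨hδ, hmax⟩ := hf
  have hlt : ∀ β ∈ (S.basis.repr f).support, β ≠ δ → S.ord.lt (γ + β) (γ + δ) :=
    fun β hβ hne => by simpa [add_comm] using S.ord.add_right γ (hmax β hβ hne)
  constructor
  · rw [Finsupp.mem_support_iff, S.repr_basis_mul, Finsupp.sum,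
      Finset.sum_eq_single_of_mem δ hδ]
    · exact mul_ne_zero (Finsupp.mem_support_iff.mp hδ) (S.s2_lc γ δ)
    · intro β hβ hne
      suffices γ + δ ∉ (S.basis.repr (S.basis γ * S.basis β)).support by
        rw [Finsupp.notMem_support_iff.mp this, mul_zero]
      intro hmem
      rcases S.eq_or_lt_of_mem_support_basis_mul hmem with heq | hltm
      · exact S.ord.lt_irrefl _ (heq ▸ hlt β hβ hne)
      · exact S.ord.lt_irrefl _ (S.ord.lt_trans hltm (hlt β hβ hne))
  · intro ε hε hne
    rw [Finsupp.mem_support_iff, S.repr_basis_mul, Finsupp.sum] at hε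
    obtain ⟨β, hβ, hterm⟩ := Finset.exists_ne_zero_of_sum_ne_zero hε
    have hεβ : ε ∈ (S.basis.repr (S.basis γ * S.basis β)).support :=
      Finsupp.mem_support_iff.mpr (right_ne_zero_of_mul hterm)
    rcases S.eq_or_lt_of_mem_support_basis_mul hεβ with rfl | hltm
    · exact hlt β hβ fun h => hne (h ▸ rfl)
    · by_cases hβδ : β = δ
      · exact hβδ ▸ hltm
      · exact S.ord.lt_trans hltm (hlt β hβ hβδ)

theorem dvdL_iff_le {α β : Fin n → ℕ} : S.DvdL α β ↔ α ≤ β := by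
  rw [le_iff_exists_add']
  constructor
  · rintro ⟨γ, hγ⟩
    exact ⟨γ, hγ.unique ((S.isLM_basis α).basis_mul γ)⟩
  · rintro ⟨γ, rfl⟩
    exact ⟨γ, (S.isLM_basis α).basis_mul γ⟩

theorem normalSet_eq_setOf_forall_not_le (S : SolvAlg K A n) (G : Set A) :
    NormalSet S G = {γ | ∀ α ∈ {α | ∃ g ∈ G, S.IsLM g α}, ¬ α ≤ γ} := by
  ext γ
  simp only [NormalSet, Set.mem_ofPred_eq, dvdL_iff_le]
  grind

theorem IsLM.lt_of_mem_support_sub_smul {f h : A} {α : Fin n → ℕ} (hf : S.IsLM f α)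
    (hh : S.IsLM h α) {β : Fin n → ℕ}
    (hβ : β ∈ (S.basis.repr (f - (S.basis.repr f α / S.basis.repr h α) • h)).support) :
    S.ord.lt β α := by
  classical
  have hh0 : S.basis.repr h α ≠ 0 := Finsupp.mem_support_iff.mp hh.1
  rw [map_sub, map_smul] at hβ
  by_cases hβα : β = α
  · subst hβα
    simp [Finsupp.mem_support_iff, hh0] at hβ
  · rcases Finset.mem_union.mp (Finsupp.support_sub hβ) with hβf | hβh
    · exact hf.2 β hβf hβα
    · exact hh.2 β (Finsupp.support_smul hβh) hβα

theorem eq_top_of_forall_exists_isLM (S : SolvAlg K A n) {M : Submodule K A}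
    (hM : ∀ α, ∃ h ∈ M, S.IsLM h α) : M = ⊤ := by
  suffices ∀ α f, S.IsLM f α → f ∈ M by
    refine eq_top_iff.mpr fun f _ => ?_
    by_cases hf : f = 0
    · exact hf ▸ M.zero_mem
    · obtain ⟨α, hα⟩ := S.exists_isLM hf
      exact this α f hα
  intro α
  induction α using S.ord.wf.induction with
  | h α ih =>
    intro f hf
    obtain ⟨h, hM, hh⟩ := hM α
    set c := S.basis.repr f α / S.basis.repr h α
    have hrest : f - c • h ∈ M := by
      by_cases h0 : f - c • h = 0
      · exact h0 ▸ M.zero_mem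
      · obtain ⟨β, hβ⟩ := S.exists_isLM h0
        exact ih β (hf.lt_of_mem_support_sub_smul hh hβ.1) _ hβ
    simpa using M.add_mem hrest (M.smul_mem c hM)

theorem restrictScalars_sup_span_normalSet_eq_top (N : Ideal A) {G : Set A}
    (hGN : G ⊆ N) :
    N.restrictScalars K ⊔ Submodule.span K (S.basis '' NormalSet S G) = ⊤ := by
  refine S.eq_top_of_forall_exists_isLM fun α => ?_
  by_cases hα : α ∈ NormalSet S G
  · exact ⟨_, Submodule.mem_sup_right (Submodule.subset_span ⟨α, hα, rfl⟩), S.isLM_basis α⟩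
  · simp only [NormalSet, Set.mem_ofPred_eq, not_forall, not_not] at hα
    obtain ⟨g, hg, δ, hgδ, γ, hγ⟩ := hα
    refine ⟨S.basis γ * g, Submodule.mem_sup_left (N.mul_mem_left _ (hGN hg)), ?_⟩
    rw [hγ.unique ((S.isLM_basis δ).basis_mul γ)]
    exact hgδ.basis_mul γ

theorem restrictScalars_inf_span_normalSet_eq_bot {N : Ideal A} {G : Set A}
    (hG : ∀ f ∈ N, f ≠ 0 → ∃ g ∈ G, ∃ α β, S.IsLM g α ∧ S.IsLM f β ∧ S.DvdL α β) :
    N.restrictScalars K ⊓ Submodule.span K (S.basis '' NormalSet S G) = ⊥ := by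
  refine eq_bot_iff.mpr fun f ⟨hfN, hfV⟩ => (Submodule.mem_bot K).mpr ?_
  by_contra hf
  obtain ⟨g, hg, α, β, hgα, hfβ, hdvd⟩ := hG f hfN hf
  have hβ : β ∈ NormalSet S G := S.basis.mem_span_image.mp hfV hfβ.1
  exact hβ g hg α hgα hdvd

end SolvAlg

/-- Proposition 1.2.7 (iv), (v), (vi): basic facts determined by a left Gröbner basis `𝒢`
of a left ideal `N`: (i) `A = N ⊕ K`-span `𝒩(𝒢)` as `K`-vector spaces; (ii) the cosets of
the normal monomials form a `K`-basis of `A/N`; (iii) `𝒩(𝒢)` is finite (equivalently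
`dim_K A/N < ∞`) iff for every `i` some `g ∈ 𝒢` has `LM g = a_i^{m_i}`. -/
theorem solvAlg_GB_decomposition {K : Type*} [Field K] {A : Type*} [Ring A] [Algebra K A]
    {n : ℕ} (S : SolvAlg K A n) (N : Ideal A) (G : Set A)
    (hGB : SolvAlg.IsGBIdeal S N G) :
    (Submodule.restrictScalars K N ⊔
        Submodule.span K ((fun γ => S.basis γ) '' SolvAlg.NormalSet S G) = ⊤ ∧
      Submodule.restrictScalars K N ⊓
        Submodule.span K ((fun γ => S.basis γ) '' SolvAlg.NormalSet S G) = ⊥) ∧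
    (LinearIndependent K (fun γ : SolvAlg.NormalSet S G =>
        (Submodule.Quotient.mk (S.basis (γ : Fin n → ℕ)) : A ⧸ N)) ∧
      Submodule.span K (Set.range (fun γ : SolvAlg.NormalSet S G =>
        (Submodule.Quotient.mk (S.basis (γ : Fin n → ℕ)) : A ⧸ N))) = ⊤) ∧
    ((SolvAlg.NormalSet S G).Finite ↔
      ∀ i : Fin n, ∃ g ∈ G, ∃ m : ℕ, S.IsLM g (Pi.single i m)) ∧
    ((SolvAlg.NormalSet S G).Finite ↔ FiniteDimensional K (A ⧸ N)) := by
  obtain ⟨hGN, -, hGdvd⟩ := hGB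
  have hsup := S.restrictScalars_sup_span_normalSet_eq_top N hGN
  have hinf := S.restrictScalars_inf_span_normalSet_eq_bot hGdvd
  have hker : LinearMap.ker (N.mkQ.restrictScalars K) = N.restrictScalars K := by
    rw [LinearMap.ker_restrictScalars, Submodule.ker_mkQ]
  have hcompl : IsCompl (LinearMap.ker (N.mkQ.restrictScalars K))
      (Submodule.span K (Set.range fun γ : SolvAlg.NormalSet S G => S.basis γ)) := by
    rw [hker, ← Set.image_eq_range]
    exact .of_eq hinf hsup
  obtain ⟨hli, hspan⟩ := LinearMap.linearIndependent_comp_and_span_eq_top_of_isCompl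
    (φ := N.mkQ.restrictScalars K) (Submodule.mkQ_surjective N)
    (S.basis.linearIndependent.comp _ Subtype.val_injective) hcompl
  let b := Module.Basis.mk hli hspan.ge
  refine ⟨⟨hsup, hinf⟩, ⟨hli, hspan⟩, ?_, ?_⟩
  · rw [S.normalSet_eq_setOf_forall_not_le, finite_setOf_forall_not_le_iff]
    exact forall_congr' fun i =>
      ⟨fun ⟨m, g, hg, h⟩ => ⟨g, hg, m, h⟩, fun ⟨g, hg, m, h⟩ => ⟨m, g, hg, h⟩⟩
  · rw [← Set.finite_coe_iff]
    exact ⟨fun _ => .of_basis b, fun _ => Module.Finite.finite_basis b⟩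
end
end

section
/- Let A be a solvable polynomial algebra with admissible system (𝔅, ≺), L a free left A-module with left monomial ordering ≺_e, and N = Σ_{i=1}^m A ξ_i the submodule generated by nonzero elements U = {ξ_1,…,ξ_m}. Let 𝒢 = {g_1,…,g_t} be a left Gröbner basis of N, and let U_{m×t} and V_{t×m} be matrices over A with (ξ_1,…,ξ_m)^T = U_{m×t}(g_1,…,g_t)^T and (g_1,…,g_t)^T = V_{t×m}(ξ_1,…,ξ_m)^T. Let 𝒮_1,…,𝒮_r ∈ A^{1×t} be a generating set of the syzygy module Syz(𝒢) = {(h_1,…,h_t) | Σ_k h_k g_k = 0}, and let D_{(1)},…,D_{(m)} be the rows of D_{m×m} = U_{m×t}V_{t×m} − E_{m×m} (E the identity matrix). Then the syzygy module Syz(U) = {(h_1,…,h_m) ∈ A^{1×m} | Σ_{i=1}^m h_i ξ_i = 0} is generated (as a left A-module) by {𝒮_1 V_{t×m}, …, 𝒮_r V_{t×m}, D_{(1)}, …, D_{(m)}}. -/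
/-!
Substituting `g = V ξ` turns every syzygy `𝒮` of `g` into the syzygy `𝒮 V` of `ξ`, and
`ξ = U V ξ` makes every row of `D = U V − E` a syzygy of `ξ`. Conversely, a syzygy `h` of `ξ`
yields the syzygy `h U` of `g`, and `h = (h U) V − h D`.
-/

noncomputable section

open scoped BigOperators

open Matrix

namespace Fintype

theorem linearCombination_vecMul {R M ι κ : Type*} [Semiring R] [AddCommMonoid M] [Module R M]
    [Fintype ι] [Fintype κ] (ξ : ι → M) (V : Matrix κ ι R) (v : κ → R) :
    Fintype.linearCombination R ξ (v ᵥ* V) =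
      Fintype.linearCombination R (fun k => Fintype.linearCombination R ξ (V k)) v := by
  rw [vecMul_eq_sum, map_sum]
  simp only [map_smul]
  rfl

theorem ker_linearCombination_eq_map_sup_span {R M ι κ : Type*} [Ring R] [AddCommGroup M]
    [Module R M] [Fintype ι] [Fintype κ] [DecidableEq ι] {ξ : ι → M} {g : κ → M}
    {U : Matrix ι κ R} {V : Matrix κ ι R}
    (hU : ∀ i, Fintype.linearCombination R g (U i) = ξ i)
    (hV : ∀ k, Fintype.linearCombination R ξ (V k) = g k) :
    LinearMap.ker (Fintype.linearCombination R ξ) =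
      (LinearMap.ker (Fintype.linearCombination R g)).map V.vecMulLinear ⊔
        Submodule.span R (Set.range (U * V - 1)) := by
  have hV' : ∀ v, Fintype.linearCombination R ξ (v ᵥ* V) = Fintype.linearCombination R g v :=
    fun v => by rw [linearCombination_vecMul, funext hV]
  have hU' : ∀ w, Fintype.linearCombination R g (w ᵥ* U) = Fintype.linearCombination R ξ w :=
    fun w => by rw [linearCombination_vecMul, funext hU]
  refine le_antisymm (fun h hh => ?_) (sup_le ?_ ?_)
  · have hdecomp : h = (h ᵥ* U) ᵥ* V - h ᵥ* (U * V - 1) := by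
      rw [vecMul_sub, vecMul_one, vecMul_vecMul, sub_sub_cancel]
    rw [hdecomp]
    refine Submodule.sub_mem _ (Submodule.mem_sup_left ⟨h ᵥ* U, ?_, rfl⟩)
      (Submodule.mem_sup_right ?_)
    · rwa [SetLike.mem_coe, LinearMap.mem_ker, hU']
    · rw [vecMul_eq_sum]
      exact Submodule.sum_mem _ fun i _ => Submodule.smul_mem _ _ (Submodule.subset_span ⟨i, rfl⟩)
  · rintro _ ⟨v, hv, rfl⟩
    rwa [LinearMap.mem_ker, vecMulLinear_apply, hV']
  · rw [Submodule.span_le]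
    rintro _ ⟨i, rfl⟩
    have hrow : (U * V - 1 : Matrix ι ι R) i = U i ᵥ* V - Pi.single i 1 := by
      ext j
      rw [Matrix.sub_apply, one_eq_pi_single]
      rfl
    change Fintype.linearCombination R ξ ((U * V - 1 : Matrix ι ι R) i) = 0
    rw [hrow, map_sub, hV', hU, linearCombination_apply_single, one_smul, sub_self]

end Fintype

theorem solvAlg_syzygy_generators_general {A : Type*} [Ring A]
    {s : ℕ}
    {m t r : ℕ} (ξ : Fin m → (Fin s → A))
    (g : Fin t → (Fin s → A))
    (U : Fin m → Fin t → A) (V : Fin t → Fin m → A)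
    (hU : ∀ i, ξ i = ∑ k, U i k • g k) (hV : ∀ k, g k = ∑ i, V k i • ξ i)
    (𝒮 : Fin r → (Fin t → A))
    (h𝒮 : ∀ h : Fin t → A, (∑ k, h k • g k = 0) ↔ h ∈ Submodule.span A (Set.range 𝒮)) :
    ∀ h : Fin m → A, (∑ i, h i • ξ i = 0) ↔
      h ∈ Submodule.span A
        ({x : Fin m → A | ∃ l : Fin r, x = fun j => ∑ k, 𝒮 l k * V k j} ∪
         {x : Fin m → A | ∃ i : Fin m,
            x = fun j => (∑ k, U i k * V k j) - (if i = j then 1 else 0)}) := by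
  have hsyz : LinearMap.ker (Fintype.linearCombination A g) = Submodule.span A (Set.range 𝒮) :=
    Submodule.ext h𝒮
  have hgens : {x : Fin m → A | ∃ l : Fin r, x = fun j => ∑ k, 𝒮 l k * V k j} ∪
      {x : Fin m → A | ∃ i : Fin m,
        x = fun j => (∑ k, U i k * V k j) - (if i = j then 1 else 0)} =
      (of V).vecMulLinear '' Set.range 𝒮 ∪ Set.range (of U * of V - 1) := by
    rw [← Set.range_comp]
    exact congrArg₂ _ (Set.ext fun _ => exists_congr fun _ => eq_comm)
      (Set.ext fun _ => exists_congr fun _ => eq_comm)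
  intro h
  rw [hgens, Submodule.span_union, ← Submodule.map_span, ← hsyz,
    ← Fintype.ker_linearCombination_eq_map_sup_span (U := of U) (V := of V)
      (fun i => (hU i).symm) fun k => (hV k).symm]
  rfl

/-- Theorem 3.1.2: with `Ξ = {ξ_1,…,ξ_m}` generating `N`, a left Gröbner basis
`𝒢 = {g_1,…,g_t}` of `N`, transition matrices `U`, `V` with `ξ = U g` and `g = V ξ`,
a generating set `𝒮_1,…,𝒮_r` of `Syz(𝒢)`, and `D = UV − E`, the syzygy module `Syz(Ξ)`
is generated by `{𝒮_1 V, …, 𝒮_r V, D_{(1)}, …, D_{(m)}}`. -/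
theorem solvAlg_syzygy_generators {K : Type*} [Field K] {A : Type*} [Ring A] [Algebra K A]
    {n : ℕ} (S : SolvAlg K A n) {s : ℕ} (O : ModOrder S s)
    {m t r : ℕ} (ξ : Fin m → (Fin s → A)) (hξ : ∀ i, ξ i ≠ 0)
    (g : Fin t → (Fin s → A)) (hg : ∀ k, g k ≠ 0)
    (hGB : SolvAlg.IsGBrel S O.lt
      ((Submodule.span A (Set.range ξ) : Submodule A (Fin s → A)) : Set (Fin s → A))
      (Set.range g))
    (U : Fin m → Fin t → A) (V : Fin t → Fin m → A)
    (hU : ∀ i, ξ i = ∑ k, U i k • g k) (hV : ∀ k, g k = ∑ i, V k i • ξ i)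
    (𝒮 : Fin r → (Fin t → A))
    (h𝒮 : ∀ h : Fin t → A, (∑ k, h k • g k = 0) ↔ h ∈ Submodule.span A (Set.range 𝒮)) :
    ∀ h : Fin m → A, (∑ i, h i • ξ i = 0) ↔
      h ∈ Submodule.span A
        ({x : Fin m → A | ∃ l : Fin r, x = fun j => ∑ k, 𝒮 l k * V k j} ∪
         {x : Fin m → A | ∃ i : Fin m,
            x = fun j => (∑ k, U i k * V k j) - (if i = j then 1 else 0)}) :=
  solvAlg_syzygy_generators_general ξ g U V hU hV 𝒮 h𝒮
end
end
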